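/- arXiv:math/0411071 — 4 statements merged into one kernel-verified Lean document; each statement's English description precedes it below -/
import Mathlib

section
/- There exists a constant C > 0 such that for every integer b ≥ 2, ∫_{1/b}^1 (1 − (1−x)^b − bx(1−x)^{b−1}) x^{−2} dx ≥ C(b−1). -/
/-! The integrand is the derivative of `x ↦ -(1 - (1 - x) ^ b) / x`, so the integral over
`[1/b, 1]` equals `b (1 - (1 - 1/b) ^ b) - 1`. Since `(1 - 1/b) ^ b ≤ e⁻¹`, this is at least
`b (1 - e⁻¹) - 1 = (1 - 2e⁻¹)(b - 1) + e⁻¹(b - 2)`, and `1 - 2e⁻¹ > 0`. -/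

open Real

theorem hasDerivAt_neg_one_sub_one_sub_pow_div (n : ℕ) {x : ℝ} (hx : x ≠ 0) :
    HasDerivAt (fun y : ℝ => -(1 - (1 - y) ^ n) / y)
      ((1 - (1 - x) ^ n - n * x * (1 - x) ^ (n - 1)) / x ^ 2) x := by
  have hpow : HasDerivAt (fun y : ℝ => (1 - y) ^ n) (n * (1 - x) ^ (n - 1) * -1) x :=
    ((hasDerivAt_id x).const_sub 1).pow n
  exact ((hpow.const_sub 1).fun_neg.fun_div (hasDerivAt_id' x) hx).congr_deriv (by ring)

theorem integral_one_sub_one_sub_pow_sub_mul_div_sq {a : ℝ} (ha : 0 < a) {n : ℕ}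
    (hn : n ≠ 0) :
    ∫ x in a..1, (1 - (1 - x) ^ n - n * x * (1 - x) ^ (n - 1)) / x ^ 2
      = (1 - (1 - a) ^ n) / a - 1 := by
  have hpos : ∀ x ∈ Set.uIcc a 1, 0 < x := fun x hx =>
    lt_of_lt_of_le (lt_min ha one_pos) hx.1
  have hint : IntervalIntegrable
      (fun x : ℝ => (1 - (1 - x) ^ n - n * x * (1 - x) ^ (n - 1)) / x ^ 2)
        MeasureTheory.volume a 1 :=
    ContinuousOn.intervalIntegrable <|
      ContinuousOn.div (by fun_prop) (by fun_prop) fun x hx => (pow_pos (hpos x hx) 2).ne'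
  rw [intervalIntegral.integral_eq_sub_of_hasDerivAt
    (fun x hx => hasDerivAt_neg_one_sub_one_sub_pow_div n (hpos x hx).ne') hint,
    sub_self, zero_pow hn]
  ring

/-- For the uniform measure `Λ₀` on `(0,1)`, the extra merger rate `α_b` grows
linearly in `b`. -/
theorem stmt_7 :
    ∃ C : ℝ, 0 < C ∧ ∀ b : ℕ, 2 ≤ b →
      C * ((b : ℝ) - 1) ≤
        ∫ x in (1 / (b : ℝ))..1,
          (1 - (1 - x) ^ b - (b : ℝ) * x * (1 - x) ^ (b - 1)) / x ^ 2 := by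
  refine ⟨1 - 2 * exp (-1), by linarith [exp_neg_one_lt_half], fun b hb => ?_⟩
  have hb2 : (2 : ℝ) ≤ b := by exact_mod_cast hb
  rw [integral_one_sub_one_sub_pow_sub_mul_div_sq (by positivity) (by omega),
    div_div_eq_mul_div, div_one]
  have hpow : (1 - 1 / (b : ℝ)) ^ b ≤ exp (-1) :=
    one_sub_div_pow_le_exp_neg (by linarith)
  have hlin : (1 - 1 / (b : ℝ)) ^ b * b ≤ exp (-1) * b :=
    mul_le_mul_of_nonneg_right hpow (by positivity)
  nlinarith [exp_pos (-1)]
end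

section
/- Let (α_b)_{b≥2} be nonnegative real numbers satisfying ∑_{b=2}^∞ α_b (log b)/b² < ∞, and set λ_b = b(b−1)/2 + α_b for each integer b ≥ 2. Let G_n(b) ∈ [0,1] be defined for all integers 2 ≤ b ≤ n, with G_b(b) = 1 for all b ≥ 2 and |G_{n+1}(b) − G_n(b)| ≤ α_{n+1}/λ_{n+1} for all 2 ≤ b ≤ n, and let G_∞(b) = lim_{n→∞} G_n(b). Then ∑_{b=2}^∞ (b/λ_b)(1 − G_∞(b)) ≤ ∑_{m=2}^∞ 4α_{m+1}(1 + log(m−1))/(m(m+1)) < ∞. -/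
open Filter Finset in
/-- Under condition (segcond), the second series defining the constant `ρ` is finite:
`∑_{b=2}^∞ (b/λ_b)(1 - G_∞(b)) ≤ ∑_{m=2}^∞ 4α_{m+1}(1 + log(m-1))/(m(m+1)) < ∞`. -/
theorem stmt_12 (α : ℕ → ℝ) (hα : ∀ b : ℕ, 2 ≤ b → 0 ≤ α b)
    (lam : ℕ → ℝ) (hlam : ∀ b : ℕ, lam b = (b : ℝ) * ((b : ℝ) - 1) / 2 + α b)
    (G : ℕ → ℕ → ℝ)
    (hG01 : ∀ n b : ℕ, 2 ≤ b → b ≤ n → G n b ∈ Set.Icc (0 : ℝ) 1)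
    (hGbb : ∀ b : ℕ, 2 ≤ b → G b b = 1)
    (hGinc : ∀ n b : ℕ, 2 ≤ b → b ≤ n → |G (n + 1) b - G n b| ≤ α (n + 1) / lam (n + 1))
    (hseg : Summable (fun b : ℕ => α b * Real.log b / (b : ℝ) ^ 2))
    (Ginf : ℕ → ℝ)
    (hGinf : ∀ b : ℕ, 2 ≤ b →
      Filter.Tendsto (fun n => G n b) Filter.atTop (nhds (Ginf b))) :
    Summable (fun j : ℕ => ((j : ℝ) + 2) / lam (j + 2) * (1 - Ginf (j + 2))) ∧
      Summable (fun j : ℕ =>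
        4 * α (j + 3) * (1 + Real.log ((j : ℝ) + 1)) / (((j : ℝ) + 2) * ((j : ℝ) + 3))) ∧
      (∑' j : ℕ, ((j : ℝ) + 2) / lam (j + 2) * (1 - Ginf (j + 2))) ≤
        ∑' j : ℕ,
          4 * α (j + 3) * (1 + Real.log ((j : ℝ) + 1)) / (((j : ℝ) + 2) * ((j : ℝ) + 3)) := by
  -- abbreviations
  set w : ℕ → ℝ := fun j => ((j : ℝ) + 2) / lam (j + 2) with hwdef
  set A : ℕ → ℝ := fun k => α (k + 3) / lam (k + 3) with hAdef
  set R : ℕ → ℝ := fun k =>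
    4 * α (k + 3) * (1 + Real.log ((k : ℝ) + 1)) / (((k : ℝ) + 2) * ((k : ℝ) + 3)) with hRdef
  -- basic positivity facts
  have hα' : ∀ k : ℕ, 0 ≤ α (k + 3) := fun k => hα _ (by omega)
  have hlamge : ∀ b : ℕ, 2 ≤ b → (b : ℝ) * ((b : ℝ) - 1) / 2 ≤ lam b := by
    intro b hb; rw [hlam]; linarith [hα b hb]
  have hlampos : ∀ b : ℕ, 2 ≤ b → 0 < lam b := by
    intro b hb
    have hb' : (2 : ℝ) ≤ (b : ℝ) := by exact_mod_cast hb
    have := hlamge b hb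
    nlinarith
  have hlamge2 : ∀ j : ℕ, ((j : ℝ) + 2) * ((j : ℝ) + 1) / 2 ≤ lam (j + 2) := by
    intro j
    have := hlamge (j + 2) (by omega)
    push_cast at this
    nlinarith [this]
  have hlamge3 : ∀ k : ℕ, ((k : ℝ) + 3) * ((k : ℝ) + 2) / 2 ≤ lam (k + 3) := by
    intro k
    have := hlamge (k + 3) (by omega)
    push_cast at this
    nlinarith [this]
  have hwnonneg : ∀ j : ℕ, 0 ≤ w j := by
    intro j
    exact div_nonneg (by positivity) (hlampos (j + 2) (by omega)).le
  have hw_le : ∀ j : ℕ, w j ≤ 2 / ((j : ℝ) + 1) := by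
    intro j
    have h2 : (0 : ℝ) < ((j : ℝ) + 2) * ((j : ℝ) + 1) / 2 := by positivity
    have := div_le_div_of_nonneg_left (a := (j : ℝ) + 2) (by positivity) h2 (hlamge2 j)
    calc w j ≤ ((j : ℝ) + 2) / (((j : ℝ) + 2) * ((j : ℝ) + 1) / 2) := this
      _ = 2 / ((j : ℝ) + 1) := by
          rw [div_eq_div_iff (by positivity) (by positivity)]; ring
  have hAnonneg : ∀ k : ℕ, 0 ≤ A k := by
    intro k
    exact div_nonneg (hα' k) (hlampos (k + 3) (by omega)).le
  have hA_le : ∀ k : ℕ, A k ≤ 2 * α (k + 3) / (((k : ℝ) + 2) * ((k : ℝ) + 3)) := by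
    intro k
    have h2 : (0 : ℝ) < ((k : ℝ) + 3) * ((k : ℝ) + 2) / 2 := by positivity
    have := div_le_div_of_nonneg_left (a := α (k + 3)) (hα' k) h2 (hlamge3 k)
    calc A k ≤ α (k + 3) / (((k : ℝ) + 3) * ((k : ℝ) + 2) / 2) := this
      _ = 2 * α (k + 3) / (((k : ℝ) + 2) * ((k : ℝ) + 3)) := by
          rw [div_eq_div_iff (by positivity) (by positivity)]; ring
  have hlognn : ∀ k : ℕ, 0 ≤ Real.log ((k : ℝ) + 1) := by
    intro k
    apply Real.log_nonneg
    have : (0 : ℝ) ≤ (k : ℝ) := Nat.cast_nonneg k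
    linarith
  have hRnonneg : ∀ k : ℕ, 0 ≤ R k := by
    intro k
    have := hlognn k
    have := hα' k
    have : (0:ℝ) ≤ 4 * α (k+3) * (1 + Real.log ((k:ℝ)+1)) := by positivity
    exact div_nonneg this (by positivity)
  -- harmonic-log bound
  have hHlog : ∀ k : ℕ, ∑ j ∈ Finset.range (k + 1), 2 / ((j : ℝ) + 1)
      ≤ 2 * (1 + Real.log ((k : ℝ) + 1)) := by
    intro k
    induction k with
    | zero => simp
    | succ n ih =>
      rw [Finset.sum_range_succ]
      have hlog : Real.log ((n : ℝ) + 1) + 1 / ((n : ℝ) + 2) ≤ Real.log ((n : ℝ) + 2) := by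
        have h := Real.log_le_sub_one_of_pos
          (x := ((n : ℝ) + 1) / ((n : ℝ) + 2)) (by positivity)
        rw [Real.log_div (by positivity) (by positivity)] at h
        have he : ((n : ℝ) + 1) / ((n : ℝ) + 2) - 1 = -(1 / ((n : ℝ) + 2)) := by
          field_simp
          norm_num
        rw [he] at h
        linarith
      push_cast
      have e : ((n : ℝ) + 1 + 1) = (n : ℝ) + 2 := by ring
      rw [e]
      have e2 : (2 : ℝ) / ((n : ℝ) + 2) = 2 * (1 / ((n : ℝ) + 2)) := by ring
      rw [e2]
      linarith
  -- 1 < log 3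
  have hlog3 : (1 : ℝ) < Real.log 3 := by
    rw [Real.lt_log_iff_exp_lt (by norm_num)]
    calc Real.exp 1 < 2.7182818286 := Real.exp_one_lt_d9
      _ < 3 := by norm_num
  -- summability of the shifted (segcond) series
  have hseg3 : Summable (fun k : ℕ => α (k + 3) * Real.log ((k : ℝ) + 3) / ((k : ℝ) + 3) ^ 2) := by
    refine ((summable_nat_add_iff 3).2 hseg).congr fun n => ?_
    push_cast
    ring
  -- R is dominated by the (segcond) series
  have hR_le : ∀ k : ℕ, R k ≤ 16 * (α (k + 3) * Real.log ((k : ℝ) + 3) / ((k : ℝ) + 3) ^ 2) := by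
    intro k
    have h1 : (1 : ℝ) ≤ Real.log ((k : ℝ) + 3) := by
      have : Real.log 3 ≤ Real.log ((k : ℝ) + 3) := by
        apply Real.log_le_log (by norm_num)
        have : (0 : ℝ) ≤ (k : ℝ) := Nat.cast_nonneg k
        linarith
      linarith
    have h2 : Real.log ((k : ℝ) + 1) ≤ Real.log ((k : ℝ) + 3) := by
      apply Real.log_le_log (by positivity)
      linarith
    have hk0 : (0 : ℝ) ≤ (k : ℝ) := Nat.cast_nonneg k
    rw [hRdef]
    rw [div_le_iff₀ (by positivity)]
    rw [show (16 : ℝ) * (α (k + 3) * Real.log ((k : ℝ) + 3) / ((k : ℝ) + 3) ^ 2)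
        = (16 * (α (k + 3) * Real.log ((k : ℝ) + 3))) / ((k : ℝ) + 3) ^ 2 by ring]
    rw [div_mul_eq_mul_div, le_div_iff₀ (by positivity)]
    nlinarith [hα' k, hlognn k, mul_nonneg (hα' k) (hlognn k),
      mul_nonneg (hα' k) (le_trans zero_le_one h1), sq_nonneg ((k:ℝ)+3),
      mul_nonneg (mul_nonneg (hα' k) (sub_nonneg.2 h2)) (sq_nonneg ((k:ℝ)+3)),
      mul_nonneg (mul_nonneg (hα' k) (sub_nonneg.2 h1)) (sq_nonneg ((k:ℝ)+3)),
      mul_nonneg (mul_nonneg (hα' k) (le_trans zero_le_one h1)) hk0]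
  have hRsum : Summable R :=
    Summable.of_nonneg_of_le hRnonneg hR_le (hseg3.mul_left 16)
  -- A is dominated by R
  have hA_leR : ∀ k : ℕ, A k ≤ R k := by
    intro k
    refine (hA_le k).trans ?_
    rw [hRdef]
    dsimp only
    rw [div_le_div_iff₀ (by positivity) (by positivity)]
    nlinarith [hα' k, hlognn k, mul_nonneg (hα' k) (hlognn k),
      sq_nonneg (((k : ℝ) + 2) * ((k : ℝ) + 3)),
      mul_nonneg (mul_nonneg (hα' k) (hlognn k)) (sq_nonneg (((k : ℝ) + 2) * ((k : ℝ) + 3))),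
      mul_pos (show (0:ℝ) < (k:ℝ)+2 by positivity) (show (0:ℝ) < (k:ℝ)+3 by positivity)]
  have hAsum : Summable A := Summable.of_nonneg_of_le hAnonneg hA_leR hRsum
  have hTail : ∀ j : ℕ, Summable (fun i => A (j + i)) := by
    intro j
    exact ((summable_nat_add_iff j).2 hAsum).congr fun i => congrArg A (Nat.add_comm i j)
  set T : ℕ → ℝ := fun j => ∑' i, A (j + i) with hTdef
  -- Ginf is at most 1
  have hGle1 : ∀ j : ℕ, Ginf (j + 2) ≤ 1 := by
    intro j
    apply le_of_tendsto (hGinf (j + 2) (by omega))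
    filter_upwards [eventually_ge_atTop (j + 2)] with n hn
    exact (hG01 n (j + 2) (by omega) hn).2
  -- key estimate: 1 - Ginf (j+2) ≤ T j
  have hkey : ∀ j : ℕ, 1 - Ginf (j + 2) ≤ T j := by
    intro j
    have hb2 : 2 ≤ j + 2 := by omega
    have hstep : ∀ N : ℕ, |G (j + 2 + N) (j + 2) - 1| ≤ ∑ i ∈ Finset.range N, A (j + i) := by
      intro N
      induction N with
      | zero => simp [hGbb (j + 2) hb2]
      | succ n ih =>
        have h1 := hGinc (j + 2 + n) (j + 2) hb2 (by omega)
        have e : j + 2 + n + 1 = (j + n) + 3 := by omega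
        rw [e] at h1
        calc |G (j + 2 + (n + 1)) (j + 2) - 1|
            = |G ((j + n) + 3) (j + 2) - 1| := by rw [show j + 2 + (n + 1) = (j + n) + 3 from by omega]
          _ ≤ |G ((j + n) + 3) (j + 2) - G (j + 2 + n) (j + 2)|
              + |G (j + 2 + n) (j + 2) - 1| := abs_sub_le _ _ _
          _ ≤ A (j + n) + ∑ i ∈ Finset.range n, A (j + i) := add_le_add h1 ih
          _ = ∑ i ∈ Finset.range (n + 1), A (j + i) := by
              rw [Finset.sum_range_succ]; ring
    have hsum_le : ∀ N : ℕ, ∑ i ∈ Finset.range N, A (j + i) ≤ T j := fun N =>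
      Summable.sum_le_tsum _ (fun i _ => hAnonneg _) (hTail j)
    have htend : Tendsto (fun N => G (j + 2 + N) (j + 2)) atTop (nhds (Ginf (j + 2))) := by
      have h := (hGinf (j + 2) hb2).comp (tendsto_add_atTop_nat (j + 2))
      exact h.congr fun N => by simp [Function.comp, Nat.add_comm N (j + 2)]
    have habs : |Ginf (j + 2) - 1| ≤ T j := by
      apply le_of_tendsto ((htend.sub tendsto_const_nhds).abs)
      exact Filter.Eventually.of_forall fun N => le_trans (hstep N) (hsum_le N)
    calc 1 - Ginf (j + 2) ≤ |1 - Ginf (j + 2)| := le_abs_self _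
      _ = |Ginf (j + 2) - 1| := abs_sub_comm _ _
      _ ≤ T j := habs
  -- the double array
  set g : ℕ → ℕ → ℝ := fun k j => if j ≤ k then w j * A k else 0 with hgdef
  have hgnn : ∀ k j : ℕ, 0 ≤ g k j := by
    intro k j
    rw [hgdef]; dsimp only
    split
    · exact mul_nonneg (hwnonneg j) (hAnonneg k)
    · exact le_refl 0
  have hgzero : ∀ k : ℕ, ∀ j ∉ Finset.range (k + 1), g k j = 0 := by
    intro k j hj
    rw [hgdef]; dsimp only
    rw [if_neg]
    simp only [Finset.mem_range] at hj
    omega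
  have hslice : ∀ k : ℕ, Summable (g k) := fun k =>
    summable_of_ne_finset_zero (hgzero k)
  have hgsum_eq : ∀ k : ℕ, ∑' j, g k j = (∑ j ∈ Finset.range (k + 1), w j) * A k := by
    intro k
    rw [tsum_eq_sum (hgzero k), Finset.sum_mul]
    apply Finset.sum_congr rfl
    intro j hj
    rw [hgdef]; dsimp only
    rw [if_pos]
    simp only [Finset.mem_range] at hj
    omega
  have hgsum_le : ∀ k : ℕ, ∑' j, g k j ≤ R k := by
    intro k
    rw [hgsum_eq k]
    have h1 : ∑ j ∈ Finset.range (k + 1), w j ≤ 2 * (1 + Real.log ((k : ℝ) + 1)) :=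
      le_trans (Finset.sum_le_sum fun j _ => hw_le j) (hHlog k)
    calc (∑ j ∈ Finset.range (k + 1), w j) * A k
        ≤ (2 * (1 + Real.log ((k : ℝ) + 1)))
            * (2 * α (k + 3) / (((k : ℝ) + 2) * ((k : ℝ) + 3))) :=
          mul_le_mul h1 (hA_le k) (hAnonneg k) (by linarith [hlognn k])
      _ = R k := by rw [hRdef]; ring
  have hgsummable : Summable (Function.uncurry g) :=
    (summable_prod_of_nonneg (f := Function.uncurry g)
      (by intro p; exact hgnn p.1 p.2)).2
      ⟨fun k => hslice k,
        Summable.of_nonneg_of_le (fun k => tsum_nonneg (fun j => hgnn k j)) hgsum_le hRsum⟩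
  have hswap : Summable (fun p : ℕ × ℕ => g p.2 p.1) :=
    ((Equiv.prodComm ℕ ℕ).summable_iff (f := Function.uncurry g)).2 hgsummable
  have hcol_summable : Summable (fun j => ∑' k, g k j) :=
    ((summable_prod_of_nonneg (f := fun p : ℕ × ℕ => g p.2 p.1)
      (fun p => hgnn p.2 p.1)).1 hswap).2
  have hcolsum_eq : ∀ j : ℕ, ∑' k, g k j = w j * T j := by
    intro j
    have hinj : Function.Injective (fun i : ℕ => j + i) := fun a b h => by simpa using h
    have hsupp : Function.support (fun k => g k j) ⊆ Set.range (fun i : ℕ => j + i) := by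
      intro k hk
      rcases le_or_gt j k with h | h
      · exact ⟨k - j, show j + (k - j) = k by omega⟩
      · exfalso
        apply hk
        rw [hgdef]; dsimp only
        rw [if_neg (by omega)]
    rw [← hinj.tsum_eq (f := fun k => g k j) hsupp]
    have heq : ∀ i : ℕ, g (j + i) j = w j * A (j + i) := by
      intro i
      rw [hgdef]; dsimp only
      rw [if_pos (Nat.le_add_right j i)]
    rw [tsum_congr heq, tsum_mul_left]
  have hwT_summable : Summable (fun j => w j * T j) :=
    hcol_summable.congr fun j => hcolsum_eq j
  have hL_nonneg : ∀ j : ℕ, 0 ≤ w j * (1 - Ginf (j + 2)) := fun j =>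
    mul_nonneg (hwnonneg j) (by linarith [hGle1 j])
  have hL_le : ∀ j : ℕ, w j * (1 - Ginf (j + 2)) ≤ w j * T j := fun j =>
    mul_le_mul_of_nonneg_left (hkey j) (hwnonneg j)
  have hLsum : Summable (fun j => w j * (1 - Ginf (j + 2))) :=
    Summable.of_nonneg_of_le hL_nonneg hL_le hwT_summable
  have hrow_summable : Summable (fun k => ∑' j, g k j) :=
    Summable.of_nonneg_of_le (fun k => tsum_nonneg (hgnn k)) hgsum_le hRsum
  have hswap_eq : ∑' j, ∑' k, g k j = ∑' k, ∑' j, g k j := Summable.tsum_comm hgsummable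
  have hfinal : ∑' j, w j * (1 - Ginf (j + 2)) ≤ ∑' k, R k := by
    calc ∑' j, w j * (1 - Ginf (j + 2)) ≤ ∑' j, w j * T j :=
          Summable.tsum_le_tsum hL_le hLsum hwT_summable
      _ = ∑' j, ∑' k, g k j := tsum_congr fun j => (hcolsum_eq j).symm
      _ = ∑' k, ∑' j, g k j := hswap_eq
      _ ≤ ∑' k, R k := Summable.tsum_le_tsum hgsum_le hrow_summable hRsum
  exact ⟨hLsum, hRsum, hfinal⟩
end

section
/- Let (α_b)_{b≥2} be nonnegative real numbers satisfying ∑_{b=2}^∞ α_b (log b)/b² < ∞, and set λ_b = b(b−1)/2 + α_b for each integer b ≥ 2. Let G_n(b) ∈ [0,1] be defined for all integers 2 ≤ b ≤ n, with G_b(b) = 1 for all b ≥ 2 and |G_{n+1}(b) − G_n(b)| ≤ α_{n+1}/λ_{n+1} for all 2 ≤ b ≤ n, and let G_∞(b) = lim_{n→∞} G_n(b). Then lim_{n→∞} ∑_{b=2}^n (b/λ_b)|G_n(b) − G_∞(b)| = 0. -/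
/-!
Since `λ_b ≥ b²/4`, the weights satisfy `∑_{b ≤ n} b/λ_b ≤ 4 (1 + log n)`, while telescoping the
increments gives `|G_n(b) - G_∞(b)| ≤ T_n := ∑_{m > n} α_m/λ_m` uniformly in `b ≤ n`. Hence the sum
is at most `4 (1 + log n) T_n ≤ 4 ∑_{m > n} (1 + log m) α_m/λ_m`, the tail of a series that converges
by (segcond) because `(1 + log m) α_m/λ_m ≤ 8 α_m log m / m²` for `m ≥ 3`.
-/

open Filter Finset Real Topology

theorem abs_sub_le_tsum_of_abs_sub_succ_le {u ε : ℕ → ℝ} {N n : ℕ} {L : ℝ}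
    (hu : ∀ m, N ≤ m → |u (m + 1) - u m| ≤ ε (m + 1)) (hε : Summable ε)
    (hL : Tendsto u atTop (𝓝 L)) (hn : N ≤ n) :
    |u n - L| ≤ ∑' k, ε (k + (n + 1)) := by
  have hstep : ∀ k, dist (u (k + n)) (u (k + 1 + n)) ≤ ε (k + (n + 1)) := fun k => by
    rw [Real.dist_eq, abs_sub_comm, add_right_comm, ← add_assoc]
    exact hu (k + n) (by omega)
  simpa [Real.dist_eq] using dist_le_tsum_of_dist_le_of_tendsto₀ (f := fun k => u (k + n)) _
    hstep ((summable_nat_add_iff (n + 1)).2 hε) (hL.comp (tendsto_add_atTop_nat n))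

theorem mul_tsum_nat_add_le_tsum_mul {ρ w : ℕ → ℝ} {n : ℕ} (hρ : ∀ m, n < m → 0 ≤ ρ m)
    (hw : Monotone w) (hρs : Summable ρ) (hwρ : Summable fun m => w m * ρ m) :
    w n * ∑' k, ρ (k + (n + 1)) ≤ ∑' k, w (k + (n + 1)) * ρ (k + (n + 1)) := by
  rw [← tsum_mul_left]
  refine Summable.tsum_le_tsum (fun k => ?_) ((summable_nat_add_iff (n + 1)).2 hρs |>.mul_left _)
    ((summable_nat_add_iff (n + 1)).2 hwρ)
  exact mul_le_mul_of_nonneg_right (hw (by omega)) (hρ _ (by omega))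

theorem monotone_one_add_log_natCast : Monotone fun m : ℕ => 1 + log m := by
  intro m m' h
  rcases Nat.eq_zero_or_pos m with rfl | hm
  · simpa using log_natCast_nonneg m'
  · have : log m ≤ log m' := log_le_log (by exact_mod_cast hm) (by exact_mod_cast h)
    dsimp only
    linarith

theorem sum_Icc_two_inv_le_one_add_log (n : ℕ) : ∑ b ∈ Icc 2 n, (b : ℝ)⁻¹ ≤ 1 + log n := by
  calc ∑ b ∈ Icc 2 n, (b : ℝ)⁻¹ ≤ ∑ b ∈ Icc 1 n, (b : ℝ)⁻¹ :=
        sum_le_sum_of_subset_of_nonneg (Icc_subset_Icc_left (by norm_num))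
          fun _ _ _ => by positivity
    _ = harmonic n := by simp [harmonic_eq_sum_Icc]
    _ ≤ 1 + log n := harmonic_le_one_add_log n

section Rates

variable {α lam : ℕ → ℝ} (hα : ∀ b, 2 ≤ b → 0 ≤ α b)
  (hlam : ∀ b : ℕ, lam b = (b : ℝ) * ((b : ℝ) - 1) / 2 + α b)
include hα hlam

theorem sq_div_four_le_lam {b : ℕ} (hb : 2 ≤ b) : (b : ℝ) ^ 2 / 4 ≤ lam b := by
  have hb' : (2 : ℝ) ≤ b := by exact_mod_cast hb
  rw [hlam]
  nlinarith [hα b hb]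

theorem lam_pos {b : ℕ} (hb : 2 ≤ b) : 0 < lam b :=
  lt_of_lt_of_le (by positivity) (sq_div_four_le_lam hα hlam hb)

theorem natCast_div_lam_le {b : ℕ} (hb : 2 ≤ b) : (b : ℝ) / lam b ≤ 4 / b := by
  have hb' : (0 : ℝ) < b := by positivity
  rw [div_le_div_iff₀ (lam_pos hα hlam hb) hb']
  nlinarith [sq_div_four_le_lam hα hlam hb]

theorem sum_div_lam_le (n : ℕ) : ∑ b ∈ Icc 2 n, (b : ℝ) / lam b ≤ 4 * (1 + log n) :=
  calc ∑ b ∈ Icc 2 n, (b : ℝ) / lam b ≤ ∑ b ∈ Icc 2 n, 4 * (b : ℝ)⁻¹ :=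
        sum_le_sum fun b hb =>
          (natCast_div_lam_le hα hlam (mem_Icc.1 hb).1).trans_eq (div_eq_mul_inv _ _)
    _ ≤ 4 * (1 + log n) := by
        rw [← mul_sum]
        gcongr
        exact sum_Icc_two_inv_le_one_add_log n

theorem div_lam_nonneg {m : ℕ} (hm : 2 ≤ m) : 0 ≤ α m / lam m :=
  div_nonneg (hα m hm) (lam_pos hα hlam hm).le

theorem div_lam_le {m : ℕ} (hm : 2 ≤ m) : α m / lam m ≤ 4 * α m / (m : ℝ) ^ 2 := by
  rw [div_le_div_iff₀ (lam_pos hα hlam hm) (by positivity)]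
  nlinarith [sq_div_four_le_lam hα hlam hm, hα m hm]

theorem one_add_log_mul_div_lam_le {m : ℕ} (hm : 3 ≤ m) :
    (1 + log m) * (α m / lam m) ≤ 8 * (α m * log m / (m : ℝ) ^ 2) := by
  have hlog : 1 ≤ log m := by
    have hm' : (3 : ℝ) ≤ m := by exact_mod_cast hm
    rw [le_log_iff_exp_le (by positivity)]
    linarith [exp_one_lt_d9]
  calc (1 + log m) * (α m / lam m) ≤ (2 * log m) * (4 * α m / (m : ℝ) ^ 2) :=
        mul_le_mul (by linarith) (div_lam_le hα hlam (by omega))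
          (div_lam_nonneg hα hlam (by omega)) (by linarith)
    _ = 8 * (α m * log m / (m : ℝ) ^ 2) := by ring

variable (hseg : Summable fun b : ℕ => α b * log b / (b : ℝ) ^ 2)
include hseg

theorem summable_one_add_log_mul_div_lam : Summable fun m : ℕ => (1 + log m) * (α m / lam m) := by
  refine (hseg.mul_left 8).of_norm_bounded_eventually_nat ?_
  filter_upwards [eventually_ge_atTop 3] with m hm
  have hlog := log_natCast_nonneg m
  rw [Real.norm_of_nonneg (mul_nonneg (by linarith) (div_lam_nonneg hα hlam (by omega)))]
  exact one_add_log_mul_div_lam_le hα hlam hm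

theorem summable_div_lam : Summable fun m : ℕ => α m / lam m := by
  refine (summable_one_add_log_mul_div_lam hα hlam hseg).of_norm_bounded_eventually_nat ?_
  filter_upwards [eventually_ge_atTop 2] with m hm
  have hρ := div_lam_nonneg hα hlam hm
  rw [Real.norm_of_nonneg hρ]
  exact le_mul_of_one_le_left hρ (by linarith [log_natCast_nonneg m])

theorem sum_div_lam_mul_abs_sub_le {G : ℕ → ℕ → ℝ} {Ginf : ℕ → ℝ}
    (hGinc : ∀ n b : ℕ, 2 ≤ b → b ≤ n → |G (n + 1) b - G n b| ≤ α (n + 1) / lam (n + 1))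
    (hGinf : ∀ b : ℕ, 2 ≤ b → Tendsto (fun n => G n b) atTop (𝓝 (Ginf b))) {n : ℕ} (hn : 2 ≤ n) :
    ∑ b ∈ Icc 2 n, (b : ℝ) / lam b * |G n b - Ginf b| ≤
      4 * ∑' k, (1 + log ↑(k + (n + 1))) * (α (k + (n + 1)) / lam (k + (n + 1))) := by
  set tail := ∑' k, α (k + (n + 1)) / lam (k + (n + 1))
  have htail : 0 ≤ tail := tsum_nonneg fun k => div_lam_nonneg hα hlam (by omega)
  calc ∑ b ∈ Icc 2 n, (b : ℝ) / lam b * |G n b - Ginf b|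
      ≤ ∑ b ∈ Icc 2 n, (b : ℝ) / lam b * tail := by
        refine sum_le_sum fun b hb => ?_
        obtain ⟨hb2, hbn⟩ := mem_Icc.1 hb
        refine mul_le_mul_of_nonneg_left ?_ (div_nonneg (by positivity) (lam_pos hα hlam hb2).le)
        exact abs_sub_le_tsum_of_abs_sub_succ_le (hGinc · b hb2) (summable_div_lam hα hlam hseg)
          (hGinf b hb2) hbn
    _ ≤ 4 * (1 + log n) * tail := by
        rw [← sum_mul]
        exact mul_le_mul_of_nonneg_right (sum_div_lam_le hα hlam n) htail
    _ ≤ 4 * ∑' k, (1 + log ↑(k + (n + 1))) * (α (k + (n + 1)) / lam (k + (n + 1))) := by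
        rw [mul_assoc]
        gcongr
        exact mul_tsum_nat_add_le_tsum_mul (fun m hm => div_lam_nonneg hα hlam (by omega))
          monotone_one_add_log_natCast (summable_div_lam hα hlam hseg)
          (summable_one_add_log_mul_div_lam hα hlam hseg)

end Rates

theorem stmt_13_general (α : ℕ → ℝ) (hα : ∀ b : ℕ, 2 ≤ b → 0 ≤ α b)
    (lam : ℕ → ℝ) (hlam : ∀ b : ℕ, lam b = (b : ℝ) * ((b : ℝ) - 1) / 2 + α b)
    (G : ℕ → ℕ → ℝ)
    (hGinc : ∀ n b : ℕ, 2 ≤ b → b ≤ n → |G (n + 1) b - G n b| ≤ α (n + 1) / lam (n + 1))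
    (hseg : Summable (fun b : ℕ => α b * Real.log b / (b : ℝ) ^ 2))
    (Ginf : ℕ → ℝ)
    (hGinf : ∀ b : ℕ, 2 ≤ b →
      Filter.Tendsto (fun n => G n b) Filter.atTop (nhds (Ginf b))) :
    Filter.Tendsto
      (fun n : ℕ => ∑ b ∈ Finset.Icc 2 n, (b : ℝ) / lam b * |G n b - Ginf b|)
      Filter.atTop (nhds 0) := by
  refine squeeze_zero' (Eventually.of_forall fun n => sum_nonneg fun b hb => ?_)
    ((eventually_ge_atTop 2).mono fun n hn =>
      sum_div_lam_mul_abs_sub_le hα hlam hseg hGinc hGinf hn) ?_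
  · exact mul_nonneg (div_nonneg (by positivity) (lam_pos hα hlam (mem_Icc.1 hb).1).le)
      (abs_nonneg _)
  · simpa using ((tendsto_sum_nat_add fun m : ℕ => (1 + log m) * (α m / lam m)).comp
      (tendsto_add_atTop_nat 1)).const_mul (4 : ℝ)

/-- Under condition (segcond), the third term in the decomposition of
`E[S_n] - θ h_{n-1}` vanishes: `∑_{b=2}^n (b/λ_b)|G_n(b) - G_∞(b)| → 0`. -/
theorem stmt_13 (α : ℕ → ℝ) (hα : ∀ b : ℕ, 2 ≤ b → 0 ≤ α b)
    (lam : ℕ → ℝ) (hlam : ∀ b : ℕ, lam b = (b : ℝ) * ((b : ℝ) - 1) / 2 + α b)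
    (G : ℕ → ℕ → ℝ)
    (hG01 : ∀ n b : ℕ, 2 ≤ b → b ≤ n → G n b ∈ Set.Icc (0 : ℝ) 1)
    (hGbb : ∀ b : ℕ, 2 ≤ b → G b b = 1)
    (hGinc : ∀ n b : ℕ, 2 ≤ b → b ≤ n → |G (n + 1) b - G n b| ≤ α (n + 1) / lam (n + 1))
    (hseg : Summable (fun b : ℕ => α b * Real.log b / (b : ℝ) ^ 2))
    (Ginf : ℕ → ℝ)
    (hGinf : ∀ b : ℕ, 2 ≤ b →
      Filter.Tendsto (fun n => G n b) Filter.atTop (nhds (Ginf b))) :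
    Filter.Tendsto
      (fun n : ℕ => ∑ b ∈ Finset.Icc 2 n, (b : ℝ) / lam b * |G n b - Ginf b|)
      Filter.atTop (nhds 0) :=
  stmt_13_general α hα lam hlam G hGinc hseg Ginf hGinf
end

section
/- Let θ > 0. Let (α_b)_{b≥2} be nonnegative real numbers satisfying ∑_{b=2}^∞ α_b (log b)/b² < ∞, and set λ_b = b(b−1)/2 + α_b for each integer b ≥ 2. Let G_n(b) ∈ [0,1] be defined for all integers 2 ≤ b ≤ n, with G_b(b) = 1 for all b ≥ 2 and |G_{n+1}(b) − G_n(b)| ≤ α_{n+1}/λ_{n+1} for all 2 ≤ b ≤ n, and let G_∞(b) = lim_{n→∞} G_n(b). Let h_{n−1} = ∑_{i=1}^{n−1} 1/i and E_n = (θ/2) ∑_{b=2}^n (b/λ_b) G_n(b). Then lim_{n→∞} (E_n − θ h_{n−1}) = −ρ, where ρ = (θ/2) ∑_{b=2}^∞ b(2/(b(b−1)) − 1/λ_b) + (θ/2) ∑_{b=2}^∞ (b/λ_b)(1 − G_∞(b)) ≥ 0, both series being convergent. -/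
/-!
With `λ_b = b(b-1)/2 + α_b`, the `b`-th term of `E_n - θ h_{n-1}` splits as
`-(θ/2) b (2/(b(b-1)) - 1/λ_b) - (θ/2) (b/λ_b)(1 - G_n(b))`. The first part equals
`2 α_b / ((b-1) λ_b) ≥ 0`. For the second, telescoping the increments of `G · b` gives
`1 - G_n(b) ≤ ∑_{m>b} α_m/λ_m`, and `b/λ_b ≤ 2/(b-1)`; exchanging the order of summation, the
resulting bound is summable in `b` as soon as `∑_m (α_m/λ_m) h_m < ∞`, which follows from the
condition on `α` because `α_m/λ_m ≤ 4 α_m/m²` and `h_m ≤ 1 + log m`. Tannery's theorem then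
gives the limit.
-/

open Filter Finset Real Topology

lemma tsum_ite_lt_eq_tsum_add (A : ℕ → ℝ) (j : ℕ) :
    ∑' i, (if j < i then A i else 0) = ∑' k, A (k + (j + 1)) := by
  rw [← (add_left_injective (j + 1)).tsum_eq (f := fun i => if j < i then A i else 0)]
  · exact tsum_congr fun k => if_pos (by omega)
  · intro i hi
    have hji : j < i := by
      by_contra h
      exact hi (if_neg h)
    exact ⟨i - (j + 1), by simp only; omega⟩

lemma summable_mul_tsum_add {A w : ℕ → ℝ} (hA : ∀ i, 0 ≤ A i) (hw : ∀ j, 0 ≤ w j)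
    (h : Summable fun i => A i * ∑ j ∈ range i, w j) :
    Summable fun j => w j * ∑' k, A (k + (j + 1)) := by
  set F : ℕ × ℕ → ℝ := fun p => if p.2 < p.1 then A p.1 * w p.2 else 0
  have hF : 0 ≤ F := fun p => by
    dsimp only [F]
    split_ifs
    exacts [mul_nonneg (hA _) (hw _), le_rfl]
  have hF_row (i : ℕ) : ∀ j ∉ range i, F (i, j) = 0 := fun j hj =>
    if_neg (by simpa using hj)
  have hF_tsum_row (i : ℕ) : ∑' j, F (i, j) = A i * ∑ j ∈ range i, w j := by
    rw [tsum_eq_sum (hF_row i), mul_sum]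
    exact sum_congr rfl fun j hj => if_pos (mem_range.1 hj)
  have hF_sum : Summable F := (summable_prod_of_nonneg hF).2
    ⟨fun i => summable_of_ne_finset_zero (hF_row i), by simpa only [hF_tsum_row] using h⟩
  refine ((summable_prod_of_nonneg fun p => hF p.swap).1 hF_sum.prod_symm).2.congr fun j => ?_
  rw [← tsum_ite_lt_eq_tsum_add, ← tsum_mul_left]
  refine tsum_congr fun i => ?_
  simp only [F, Prod.swap_prod_mk, mul_ite, mul_zero, mul_comm]

lemma tendsto_sum_range_of_dominated {G : Type*} [NormedAddCommGroup G] [CompleteSpace G]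
    {f : ℕ → ℕ → G} {g : ℕ → G} {D : ℕ → ℝ} (hD : Summable D)
    (hf : ∀ j, Tendsto (fun n => f n j) atTop (𝓝 (g j))) (hfD : ∀ n, ∀ j < n, ‖f n j‖ ≤ D j) :
    Tendsto (fun n => ∑ j ∈ range n, f n j) atTop (𝓝 (∑' j, g j)) := by
  have hD0 (j : ℕ) : 0 ≤ D j := (norm_nonneg _).trans (hfD (j + 1) j j.lt_succ_self)
  have key := tendsto_tsum_of_dominated_convergence
    (f := fun n j => if j < n then f n j else 0) hD (fun j => (hf j).congr' ?_) ?_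
  · refine key.congr fun n => ?_
    rw [tsum_eq_sum (s := range n) fun j hj => if_neg (by simpa using hj)]
    exact sum_congr rfl fun j hj => if_pos (mem_range.1 hj)
  · filter_upwards [eventually_gt_atTop j] with n hn
    exact (if_pos hn).symm
  · refine Eventually.of_forall fun n j => ?_
    split_ifs with h
    exacts [hfD n j h, by simpa using hD0 j]

lemma sub_le_tsum_of_sub_succ_le {u r : ℕ → ℝ} {b n : ℕ} (hbn : b ≤ n)
    (hu : ∀ m, b ≤ m → u m - u (m + 1) ≤ r (m + 1))
    (hr0 : ∀ k, 0 ≤ r (k + (b + 1))) (hr : Summable fun k => r (k + (b + 1))) :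
    u b - u n ≤ ∑' k, r (k + (b + 1)) := by
  obtain ⟨d, rfl⟩ := Nat.exists_eq_add_of_le hbn
  calc u b - u (b + d) = ∑ k ∈ range d, (u (b + k) - u (b + (k + 1))) := by
        rw [sum_range_sub' (fun k => u (b + k)), add_zero]
    _ ≤ ∑ k ∈ range d, r (k + (b + 1)) := sum_le_sum fun k _ => by
        rw [show k + (b + 1) = b + k + 1 by omega]
        exact hu (b + k) (by omega)
    _ ≤ ∑' k, r (k + (b + 1)) := hr.sum_le_tsum _ fun k _ => hr0 k

section KingmanRate

variable {t a : ℝ}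

lemma div_kingman_add_le (ht : 0 ≤ t) (ha : 0 ≤ a) :
    (t + 2) / ((t + 2) * (t + 1) / 2 + a) ≤ 2 / (t + 1) := by
  rw [div_le_div_iff₀ (by positivity) (by positivity)]
  nlinarith

lemma excess_div_kingman_add_mul_le (ht : 0 ≤ t) (ha : 0 ≤ a) :
    a / ((t + 2) * (t + 1) / 2 + a) * (1 + log (t + 2)) ≤ 12 * (a * log (t + 2) / (t + 2) ^ 2) := by
  have hlog : 1 / 2 ≤ log (t + 2) :=
    (by linarith [log_two_gt_d9] : (1 : ℝ) / 2 ≤ log 2).trans (log_le_log two_pos (by linarith))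
  calc a / ((t + 2) * (t + 1) / 2 + a) * (1 + log (t + 2))
      ≤ a / ((t + 2) ^ 2 / 4) * (3 * log (t + 2)) := by
        gcongr
        · nlinarith
        · linarith
    _ = 12 * (a * log (t + 2) / (t + 2) ^ 2) := by rw [div_div_eq_mul_div]; ring

end KingmanRate

noncomputable def excessFraction (α lam : ℕ → ℝ) (j : ℕ) : ℝ := α (j + 2) / lam (j + 2)

/-- Bounds the probability that the block counting process, started above `j + 2`, skips
`j + 2`. -/
noncomputable def excessTail (α lam : ℕ → ℝ) (j : ℕ) : ℝ :=
  ∑' k, excessFraction α lam (k + (j + 1))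

section Coalescent

variable {α lam : ℕ → ℝ}

lemma lam_add_two (hlam : ∀ b : ℕ, lam b = (b : ℝ) * ((b : ℝ) - 1) / 2 + α b) (j : ℕ) :
    lam (j + 2) = ((j : ℝ) + 2) * ((j : ℝ) + 1) / 2 + α (j + 2) := by
  rw [hlam]
  push_cast
  ring

lemma excessFraction_nonneg (hα : ∀ b : ℕ, 2 ≤ b → 0 ≤ α b)
    (hlam : ∀ b : ℕ, lam b = (b : ℝ) * ((b : ℝ) - 1) / 2 + α b) (j : ℕ) :
    0 ≤ excessFraction α lam j := by
  have := hα (j + 2) (by omega)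
  rw [excessFraction, lam_add_two hlam]
  positivity

lemma kingman_deficit_eq (hα : ∀ b : ℕ, 2 ≤ b → 0 ≤ α b)
    (hlam : ∀ b : ℕ, lam b = (b : ℝ) * ((b : ℝ) - 1) / 2 + α b) (j : ℕ) :
    ((j : ℝ) + 2) * (2 / (((j : ℝ) + 2) * ((j : ℝ) + 1)) - 1 / lam (j + 2)) =
      2 * excessFraction α lam j / ((j : ℝ) + 1) := by
  have := hα (j + 2) (by omega)
  have : 0 < ((j : ℝ) + 2) * ((j : ℝ) + 1) / 2 + α (j + 2) := by positivity
  rw [excessFraction, lam_add_two hlam]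
  field_simp
  ring

lemma kingman_deficit_nonneg (hα : ∀ b : ℕ, 2 ≤ b → 0 ≤ α b)
    (hlam : ∀ b : ℕ, lam b = (b : ℝ) * ((b : ℝ) - 1) / 2 + α b) (j : ℕ) :
    0 ≤ ((j : ℝ) + 2) * (2 / (((j : ℝ) + 2) * ((j : ℝ) + 1)) - 1 / lam (j + 2)) := by
  have := excessFraction_nonneg hα hlam j
  rw [kingman_deficit_eq hα hlam]
  positivity

lemma summable_excessFraction_mul_one_add_log (hα : ∀ b : ℕ, 2 ≤ b → 0 ≤ α b)
    (hlam : ∀ b : ℕ, lam b = (b : ℝ) * ((b : ℝ) - 1) / 2 + α b)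
    (hseg : Summable fun b : ℕ => α b * log b / (b : ℝ) ^ 2) :
    Summable fun j => excessFraction α lam j * (1 + log ((j : ℝ) + 2)) := by
  have hseg' : Summable fun j : ℕ => 12 * (α (j + 2) * log ((j : ℝ) + 2) / ((j : ℝ) + 2) ^ 2) := by
    simpa using ((summable_nat_add_iff 2).2 hseg).mul_left 12
  refine hseg'.of_nonneg_of_le (fun j => ?_) fun j => ?_
  · have := excessFraction_nonneg hα hlam j
    have : 0 ≤ log ((j : ℝ) + 2) := log_nonneg (by linarith [j.cast_nonneg (α := ℝ)])
    positivity
  · rw [excessFraction, lam_add_two hlam]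
    exact excess_div_kingman_add_mul_le j.cast_nonneg (hα (j + 2) (by omega))

lemma summable_excessFraction (hα : ∀ b : ℕ, 2 ≤ b → 0 ≤ α b)
    (hlam : ∀ b : ℕ, lam b = (b : ℝ) * ((b : ℝ) - 1) / 2 + α b)
    (hseg : Summable fun b : ℕ => α b * log b / (b : ℝ) ^ 2) :
    Summable (excessFraction α lam) :=
  (summable_excessFraction_mul_one_add_log hα hlam hseg).of_nonneg_of_le
    (excessFraction_nonneg hα hlam) fun j =>
      le_mul_of_one_le_right (excessFraction_nonneg hα hlam j)
        (le_add_of_nonneg_right (log_nonneg (by linarith [j.cast_nonneg (α := ℝ)])))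

lemma summable_kingman_deficit (hα : ∀ b : ℕ, 2 ≤ b → 0 ≤ α b)
    (hlam : ∀ b : ℕ, lam b = (b : ℝ) * ((b : ℝ) - 1) / 2 + α b)
    (hseg : Summable fun b : ℕ => α b * log b / (b : ℝ) ^ 2) :
    Summable fun j : ℕ =>
      ((j : ℝ) + 2) * (2 / (((j : ℝ) + 2) * ((j : ℝ) + 1)) - 1 / lam (j + 2)) :=
  ((summable_excessFraction hα hlam hseg).mul_left 2).of_nonneg_of_le
    (kingman_deficit_nonneg hα hlam) fun j => by
      rw [kingman_deficit_eq hα hlam]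
      exact div_le_self (mul_nonneg zero_le_two (excessFraction_nonneg hα hlam j))
        (by linarith [j.cast_nonneg (α := ℝ)])

lemma summable_inv_mul_excessTail (hα : ∀ b : ℕ, 2 ≤ b → 0 ≤ α b)
    (hlam : ∀ b : ℕ, lam b = (b : ℝ) * ((b : ℝ) - 1) / 2 + α b)
    (hseg : Summable fun b : ℕ => α b * log b / (b : ℝ) ^ 2) :
    Summable fun j : ℕ => ((j : ℝ) + 1)⁻¹ * excessTail α lam j := by
  refine summable_mul_tsum_add (excessFraction_nonneg hα hlam) (fun j : ℕ => by positivity) <|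
    (summable_excessFraction_mul_one_add_log hα hlam hseg).of_nonneg_of_le
      (fun i => mul_nonneg (excessFraction_nonneg hα hlam i)
        (sum_nonneg fun (j : ℕ) _ => by positivity))
      fun i => mul_le_mul_of_nonneg_left ?_ (excessFraction_nonneg hα hlam i)
  calc ∑ j ∈ range i, ((j : ℝ) + 1)⁻¹ = harmonic i := by simp [harmonic]
    _ ≤ 1 + log i := harmonic_le_one_add_log i
    _ ≤ 1 + log ((i : ℝ) + 2) := by
        rcases i.eq_zero_or_pos with rfl | hi
        · simpa using log_nonneg one_le_two
        · gcongr
          linarith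

lemma one_sub_le_excessTail (hα : ∀ b : ℕ, 2 ≤ b → 0 ≤ α b)
    (hlam : ∀ b : ℕ, lam b = (b : ℝ) * ((b : ℝ) - 1) / 2 + α b)
    (hA : Summable (excessFraction α lam)) {u : ℕ → ℝ} {j n : ℕ} (hjn : j + 2 ≤ n)
    (hu : u (j + 2) = 1)
    (hu_succ : ∀ m, j + 2 ≤ m → |u (m + 1) - u m| ≤ α (m + 1) / lam (m + 1)) :
    1 - u n ≤ excessTail α lam j := by
  have htail (k : ℕ) : α (k + (j + 2 + 1)) / lam (k + (j + 2 + 1)) =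
      excessFraction α lam (k + (j + 1)) := by
    rw [excessFraction, show k + (j + 2 + 1) = k + (j + 1) + 2 by omega]
  rw [excessTail, ← hu]
  simpa only [htail] using sub_le_tsum_of_sub_succ_le (r := fun m => α m / lam m) hjn
    (fun m hm => by linarith [(abs_le.1 (hu_succ m hm)).1])
    (fun k => by simpa only [htail] using excessFraction_nonneg hα hlam _)
    (by simpa only [htail] using (summable_nat_add_iff (j + 1)).2 hA)

lemma div_lam_mul_one_sub_mem_Icc (hα : ∀ b : ℕ, 2 ≤ b → 0 ≤ α b)
    (hlam : ∀ b : ℕ, lam b = (b : ℝ) * ((b : ℝ) - 1) / 2 + α b)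
    (hA : Summable (excessFraction α lam)) {u : ℕ → ℝ} {j n : ℕ} (hjn : j + 2 ≤ n)
    (hun : u n ≤ 1) (hu : u (j + 2) = 1)
    (hu_succ : ∀ m, j + 2 ≤ m → |u (m + 1) - u m| ≤ α (m + 1) / lam (m + 1)) :
    ((j : ℝ) + 2) / lam (j + 2) * (1 - u n) ∈
      Set.Icc 0 (2 * (((j : ℝ) + 1)⁻¹ * excessTail α lam j)) := by
  have hαj := hα (j + 2) (by omega)
  rw [lam_add_two hlam]
  refine ⟨mul_nonneg (by positivity) (sub_nonneg.2 hun), ?_⟩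
  calc ((j : ℝ) + 2) / (((j : ℝ) + 2) * ((j : ℝ) + 1) / 2 + α (j + 2)) * (1 - u n)
      ≤ 2 / ((j : ℝ) + 1) * excessTail α lam j :=
        mul_le_mul (div_kingman_add_le j.cast_nonneg hαj)
          (one_sub_le_excessTail hα hlam hA hjn hu hu_succ) (sub_nonneg.2 hun) (by positivity)
    _ = 2 * (((j : ℝ) + 1)⁻¹ * excessTail α lam j) := by ring

end Coalescent

lemma sum_Icc_sub_harmonic_eq (θ : ℝ) (lam u : ℕ → ℝ) (n : ℕ) :
    θ / 2 * ∑ b ∈ Icc 2 (n + 1), (b : ℝ) / lam b * u b - θ * ∑ i ∈ Icc 1 n, (1 : ℝ) / i =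
      -(θ / 2 * ∑ j ∈ range n,
          ((j : ℝ) + 2) * (2 / (((j : ℝ) + 2) * ((j : ℝ) + 1)) - 1 / lam (j + 2)) +
        θ / 2 * ∑ j ∈ range n, ((j : ℝ) + 2) / lam (j + 2) * (1 - u (j + 2))) := by
  rw [← Ico_add_one_right_eq_Icc, ← Ico_add_one_right_eq_Icc, sum_Ico_eq_sum_range,
    sum_Ico_eq_sum_range, show n + 1 + 1 - 2 = n by omega, Nat.add_sub_cancel, mul_sum, mul_sum,
    mul_sum, mul_sum, ← sum_sub_distrib, ← sum_add_distrib, ← sum_neg_distrib]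
  refine sum_congr rfl fun j _ => ?_
  rw [add_comm 2 j, add_comm 1 j]
  push_cast
  field_simp
  ring

/-- Proposition 4.1 (analytic content): `E[S_n] - θ h_{n-1} → -ρ`, where
`ρ = (θ/2)∑_{b=2}^∞ b(2/(b(b-1)) - 1/λ_b) + (θ/2)∑_{b=2}^∞ (b/λ_b)(1 - G_∞(b)) ≥ 0`,
both series being convergent. -/
theorem stmt_14 (θ : ℝ) (hθ : 0 < θ)
    (α : ℕ → ℝ) (hα : ∀ b : ℕ, 2 ≤ b → 0 ≤ α b)
    (lam : ℕ → ℝ) (hlam : ∀ b : ℕ, lam b = (b : ℝ) * ((b : ℝ) - 1) / 2 + α b)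
    (G : ℕ → ℕ → ℝ)
    (hG01 : ∀ n b : ℕ, 2 ≤ b → b ≤ n → G n b ∈ Set.Icc (0 : ℝ) 1)
    (hGbb : ∀ b : ℕ, 2 ≤ b → G b b = 1)
    (hGinc : ∀ n b : ℕ, 2 ≤ b → b ≤ n → |G (n + 1) b - G n b| ≤ α (n + 1) / lam (n + 1))
    (hseg : Summable (fun b : ℕ => α b * Real.log b / (b : ℝ) ^ 2))
    (Ginf : ℕ → ℝ)
    (hGinf : ∀ b : ℕ, 2 ≤ b →
      Filter.Tendsto (fun n => G n b) Filter.atTop (nhds (Ginf b)))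
    (h : ℕ → ℝ) (hh : ∀ n : ℕ, h n = ∑ i ∈ Finset.Icc 1 (n - 1), (1 : ℝ) / i)
    (E : ℕ → ℝ)
    (hE : ∀ n : ℕ, E n = θ / 2 * ∑ b ∈ Finset.Icc 2 n, (b : ℝ) / lam b * G n b) :
    Summable
        (fun j : ℕ => ((j : ℝ) + 2) * (2 / (((j : ℝ) + 2) * ((j : ℝ) + 1)) - 1 / lam (j + 2))) ∧
      Summable (fun j : ℕ => ((j : ℝ) + 2) / lam (j + 2) * (1 - Ginf (j + 2))) ∧
      0 ≤ θ / 2 * (∑' j : ℕ,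
            ((j : ℝ) + 2) * (2 / (((j : ℝ) + 2) * ((j : ℝ) + 1)) - 1 / lam (j + 2))) +
          θ / 2 * (∑' j : ℕ, ((j : ℝ) + 2) / lam (j + 2) * (1 - Ginf (j + 2))) ∧
      Filter.Tendsto (fun n : ℕ => E n - θ * h n) Filter.atTop
        (nhds (-(θ / 2 * (∑' j : ℕ,
            ((j : ℝ) + 2) * (2 / (((j : ℝ) + 2) * ((j : ℝ) + 1)) - 1 / lam (j + 2))) +
          θ / 2 * (∑' j : ℕ, ((j : ℝ) + 2) / lam (j + 2) * (1 - Ginf (j + 2)))))) := by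
  have hA := summable_excessFraction hα hlam hseg
  have hD := (summable_inv_mul_excessTail hα hlam hseg).mul_left 2
  have hterm_mem (n j : ℕ) (hj : j < n) :=
    div_lam_mul_one_sub_mem_Icc hα hlam hA (u := (G · (j + 2))) (n := n + 1) (by omega)
      (hG01 _ _ (by omega) (by omega)).2 (hGbb _ (by omega)) fun m hm => hGinc m _ (by omega) hm
  have hterm_lim (j : ℕ) :
      Tendsto (fun n => ((j : ℝ) + 2) / lam (j + 2) * (1 - G (n + 1) (j + 2))) atTop
        (𝓝 (((j : ℝ) + 2) / lam (j + 2) * (1 - Ginf (j + 2)))) :=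
    (((hGinf _ (by omega)).comp (tendsto_add_atTop_nat 1)).const_sub 1).const_mul _
  have hlimit_mem (j : ℕ) := isClosed_Icc.mem_of_tendsto (hterm_lim j)
    ((eventually_gt_atTop j).mono fun n hn => hterm_mem n j hn)
  refine ⟨summable_kingman_deficit hα hlam hseg,
    hD.of_nonneg_of_le (fun j => (hlimit_mem j).1) fun j => (hlimit_mem j).2,
    add_nonneg (mul_nonneg (by linarith) (tsum_nonneg (kingman_deficit_nonneg hα hlam)))
      (mul_nonneg (by linarith) (tsum_nonneg fun j => (hlimit_mem j).1)), ?_⟩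
  rw [← tendsto_add_atTop_iff_nat 1]
  simp only [hE, hh, Nat.add_sub_cancel, sum_Icc_sub_harmonic_eq]
  refine (((summable_kingman_deficit hα hlam hseg).tendsto_sum_tsum_nat.const_mul _).add
    ((tendsto_sum_range_of_dominated hD hterm_lim fun n j hj => ?_).const_mul _)).neg
  rw [Real.norm_of_nonneg (hterm_mem n j hj).1]
  exact (hterm_mem n j hj).2
end
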